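/- There exists a constant C > 0 such that for all n ∈ ℕ, |HSW_n| ≤ exp(C·n^{1/2}) · μ^n, where HSW_n is the set of half-space self-avoiding walks of length n on ℤ² and μ is the connective constant. -/

import Mathlib

/-- A self-avoiding walk of length `n` on `ℤ²`, starting at the origin, with
nearest-neighbour steps, padded to be constant after time `n`. -/
def IsSAW (n : ℕ) (γ : ℕ → ℤ × ℤ) : Prop :=
  γ 0 = (0, 0) ∧
  (∀ i < n, |(γ (i + 1)).1 - (γ i).1| + |(γ (i + 1)).2 - (γ i).2| = 1) ∧
  (∀ i ≤ n, ∀ j ≤ n, γ i = γ j → i = j) ∧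
  (∀ i, n ≤ i → γ i = γ n)

/-- The number of self-avoiding walks of length `n` on `ℤ²` starting at the origin. -/
noncomputable def cSAW (n : ℕ) : ℕ := Nat.card {γ : ℕ → ℤ × ℤ // IsSAW n γ}

/-- The connective constant `μ` of `ℤ²`, i.e. `lim_n cSAW n ^ (1/n)`, which by
submultiplicativity equals the infimum `⨅_{n ≥ 1} (cSAW n)^(1/n)`. -/
noncomputable def mu : ℝ := ⨅ n : ℕ, ((cSAW (n + 1) : ℝ)) ^ ((1 : ℝ) / (n + 1))

/-- A self-avoiding bridge of length `n` on `ℤ²`: a self-avoiding walk `γ` from the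
origin with `0 < y(γ k) ≤ y(γ n)` for all `1 ≤ k ≤ n`. -/
def IsBridge (n : ℕ) (γ : ℕ → ℤ × ℤ) : Prop :=
  IsSAW n γ ∧ ∀ k : ℕ, 0 < k → k ≤ n → 0 < (γ k).2 ∧ (γ k).2 ≤ (γ n).2

/-- The number of self-avoiding bridges of length `n` on `ℤ²`. -/
noncomputable def cSAB (n : ℕ) : ℕ := Nat.card {γ : ℕ → ℤ × ℤ // IsBridge n γ}

/-- A half-space self-avoiding walk of length `n` on `ℤ²`: a self-avoiding walk `γ`
from the origin with `y(γ k) > 0` for all `0 < k ≤ n`. -/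
def IsHSW (n : ℕ) (γ : ℕ → ℤ × ℤ) : Prop :=
  IsSAW n γ ∧ ∀ k : ℕ, 0 < k → k ≤ n → 0 < (γ k).2

/-- The number of half-space self-avoiding walks of length `n` on `ℤ²`. -/
noncomputable def cHSW (n : ℕ) : ℕ := Nat.card {γ : ℕ → ℤ × ℤ // IsHSW n γ}

/-!
Cut a half-space walk at the last time it reaches its maximal height `h`: the first piece is a
bridge of height `h`, and the rest, reflected, is a half-space walk of maximal height `< h`.
Iterating, a half-space walk of length `n` splits into bridges of strictly decreasing heights
`h₁ > h₂ > ⋯` with `∑ hᵢ ≤ n`; gluing them gives a single bridge of length `n`, from which the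
walk is recovered once the set `{hᵢ}` is known. Hence `|HSW_n| ≤ q(n) |SAB_n|`, where `q(n)`
counts sets of positive integers with sum at most `n`. Bridges are supermultiplicative and walks
submultiplicative, so Fekete's lemma gives `|SAB_n| ≤ μⁿ`; Rankin's bound
`q(n) ≤ e^{tn} ∏ₖ (1 + e^{-tk}) ≤ exp (tn + 1/t)` at `t = n^{-1/2}` gives `q(n) ≤ exp (2√n)`.
-/

open Finset

def concatWalk (m : ℕ) (β δ : ℕ → ℤ × ℤ) : ℕ → ℤ × ℤ :=
  fun k => if k ≤ m then β k else β m + δ (k - m)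

def truncWalk (m : ℕ) (γ : ℕ → ℤ × ℤ) : ℕ → ℤ × ℤ := fun k => γ (min k m)

def shiftWalk (m : ℕ) (γ : ℕ → ℤ × ℤ) : ℕ → ℤ × ℤ := fun k => γ (m + k) - γ m

def flipWalk (γ : ℕ → ℤ × ℤ) : ℕ → ℤ × ℤ := fun k => ((γ k).1, -(γ k).2)

section Walks

variable {m n k : ℕ} {β δ γ : ℕ → ℤ × ℤ}

theorem concatWalk_of_le (hk : k ≤ m) : concatWalk m β δ k = β k := if_pos hk

theorem concatWalk_of_ge (hδ : δ 0 = 0) (hk : m ≤ k) :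
    concatWalk m β δ k = β m + δ (k - m) := by
  rcases hk.eq_or_lt with rfl | hk
  · simp [concatWalk, hδ]
  · simp [concatWalk, hk.not_ge]

theorem concatWalk_truncWalk_shiftWalk (m : ℕ) (γ : ℕ → ℤ × ℤ) :
    concatWalk m (truncWalk m γ) (shiftWalk m γ) = γ := by
  funext k
  by_cases hk : k ≤ m
  · simp [concatWalk, truncWalk, hk]
  · simp [concatWalk, truncWalk, shiftWalk, hk, Nat.add_sub_cancel' (le_of_not_ge hk)]

theorem IsSAW.truncWalk_concatWalk (hβ : IsSAW m β) : truncWalk m (concatWalk m β δ) = β := by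
  funext k
  rcases le_total k m with hk | hk
  · simp [truncWalk, concatWalk, hk]
  · simp [truncWalk, concatWalk, hk, hβ.2.2.2 k hk]

theorem shiftWalk_concatWalk (hδ : δ 0 = 0) : shiftWalk m (concatWalk m β δ) = δ := by
  funext k
  simp [shiftWalk, concatWalk_of_ge hδ (Nat.le_add_right m k), concatWalk_of_le le_rfl]

theorem eq_and_eq_of_concatWalk_eq {β' δ' : ℕ → ℤ × ℤ} (hβ : IsSAW m β) (hβ' : IsSAW m β')
    (hδ : δ 0 = 0) (hδ' : δ' 0 = 0) (h : concatWalk m β δ = concatWalk m β' δ') :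
    β = β' ∧ δ = δ' := by
  constructor
  · rw [← hβ.truncWalk_concatWalk (δ := δ), h, hβ'.truncWalk_concatWalk]
  · rw [← shiftWalk_concatWalk (m := m) (β := β) hδ, h, shiftWalk_concatWalk hδ']

theorem flipWalk_flipWalk (γ : ℕ → ℤ × ℤ) : flipWalk (flipWalk γ) = γ := by
  funext k
  simp [flipWalk]

theorem flipWalk_injective : Function.Injective flipWalk :=
  Function.LeftInverse.injective flipWalk_flipWalk

theorem IsSAW.abs_add_abs_le (h : IsSAW n γ) (hk : k ≤ n) : |(γ k).1| + |(γ k).2| ≤ k := by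
  induction k with
  | zero => simp [h.1]
  | succ k ih =>
    have hstep := h.2.1 k hk
    have := ih (by omega)
    have h1 := abs_sub_abs_le_abs_sub (γ (k + 1)).1 (γ k).1
    have h2 := abs_sub_abs_le_abs_sub (γ (k + 1)).2 (γ k).2
    push_cast
    linarith

theorem IsSAW.snd_le (h : IsSAW n γ) (hk : k ≤ n) : (γ k).2 ≤ k :=
  (le_abs_self _).trans (by linarith [h.abs_add_abs_le hk, abs_nonneg (γ k).1])

theorem isSAW_truncWalk (h : IsSAW n γ) (hm : m ≤ n) : IsSAW m (truncWalk m γ) := by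
  obtain ⟨h0, hstep, hinj, -⟩ := h
  refine ⟨by simpa [truncWalk] using h0, fun i hi => ?_, fun i hi j hj hij => ?_, fun i hi => ?_⟩
  · simpa [truncWalk, hi.le, Nat.succ_le_of_lt hi] using hstep i (by omega)
  · exact hinj i (hi.trans hm) j (hj.trans hm) (by simpa [truncWalk, hi, hj] using hij)
  · simp [truncWalk, hi]

theorem isSAW_shiftWalk (h : IsSAW (m + n) γ) : IsSAW n (shiftWalk m γ) := by
  obtain ⟨-, hstep, hinj, hpad⟩ := h
  refine ⟨by simp [shiftWalk]; rfl, fun i hi => ?_, fun i hi j hj hij => ?_, fun i hi => ?_⟩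
  · simpa [shiftWalk, ← add_assoc] using hstep (m + i) (by omega)
  · have := hinj (m + i) (by omega) (m + j) (by omega) (sub_left_injective hij)
    omega
  · simp [shiftWalk, hpad (m + i) (by omega)]

theorem isSAW_flipWalk (h : IsSAW n γ) : IsSAW n (flipWalk γ) := by
  obtain ⟨h0, hstep, hinj, hpad⟩ := h
  refine ⟨by simp [flipWalk, h0], fun i hi => ?_, fun i hi j hj hij => ?_, fun i hi => ?_⟩
  · simpa only [flipWalk, neg_sub_neg, abs_sub_comm (γ i).2] using hstep i hi
  · exact hinj i hi j hj (by simpa [flipWalk, Prod.ext_iff] using hij)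
  · simp [flipWalk, hpad i hi]

theorem isSAW_concatWalk (hβ : IsSAW m β) (hδ : IsSAW n δ)
    (hsep : ∀ i ≤ m, ∀ j ≤ n, 0 < j → β i ≠ β m + δ j) : IsSAW (m + n) (concatWalk m β δ) := by
  obtain ⟨b0, bstep, binj, -⟩ := hβ
  obtain ⟨d0, dstep, dinj, dpad⟩ := hδ
  have hge : ∀ k, m ≤ k → concatWalk m β δ k = β m + δ (k - m) := fun k => concatWalk_of_ge d0
  refine ⟨by simp [concatWalk, b0], fun i hi => ?_, fun i hi j hj hij => ?_, fun i hi => ?_⟩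
  · rcases lt_or_ge i m with him | him
    · simpa [concatWalk_of_le him.le, concatWalk_of_le him] using bstep i him
    · simpa [hge i him, hge (i + 1) (by omega), Nat.sub_add_comm him] using dstep (i - m) (by omega)
  · wlog hij' : i ≤ j generalizing i j
    · exact (this j hj i hi hij.symm (by omega)).symm
    rcases le_or_gt j m with hjm | hjm
    · simp only [concatWalk_of_le (hij'.trans hjm), concatWalk_of_le hjm] at hij
      exact binj i (by omega) j hjm hij
    rcases le_or_gt i m with him | him
    · rw [concatWalk_of_le him, hge j hjm.le] at hij
      exact absurd hij (hsep i him (j - m) (by omega) (by omega))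
    · rw [hge i him.le, hge j hjm.le] at hij
      have := dinj (i - m) (by omega) (j - m) (by omega) (add_left_cancel hij)
      omega
  · rw [hge i (by omega), hge (m + n) (by omega), dpad (i - m) (by omega), Nat.add_sub_cancel_left]

end Walks

instance finite_isSAW (n : ℕ) : Finite {γ : ℕ → ℤ × ℤ // IsSAW n γ} := by
  let box : Finset (ℤ × ℤ) := Icc (-(n : ℤ)) n ×ˢ Icc (-(n : ℤ)) n
  have hbox : ∀ γ : {γ // IsSAW n γ}, ∀ i : Fin (n + 1), γ.1 i ∈ box := by
    intro γ i
    have := γ.2.abs_add_abs_le (Nat.lt_succ_iff.1 i.2)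
    have : (i : ℤ) ≤ n := by exact_mod_cast Nat.lt_succ_iff.1 i.2
    simp only [box, mem_product, mem_Icc, ← abs_le]
    constructor <;> linarith [abs_nonneg (γ.1 i).1, abs_nonneg (γ.1 i).2]
  refine Finite.of_injective (fun γ (i : Fin (n + 1)) => (⟨γ.1 i, hbox γ i⟩ : box)) ?_
  intro γ γ' h
  have hle : ∀ k ≤ n, γ.1 k = γ'.1 k := fun k hk =>
    congrArg Subtype.val (congrFun h ⟨k, Nat.lt_succ_of_le hk⟩)
  ext1; funext k
  rcases le_total k n with hk | hk
  · exact hle k hk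
  · rw [γ.2.2.2.2 k hk, γ'.2.2.2.2 k hk, hle n le_rfl]

instance finite_isBridge (n : ℕ) : Finite {γ : ℕ → ℤ × ℤ // IsBridge n γ} :=
  Finite.of_injective _ (Subtype.impEmbedding _ _ fun _ h => h.1).injective

section Bridges

variable {m n k : ℕ} {β δ : ℕ → ℤ × ℤ}

theorem IsBridge.snd_nonneg (h : IsBridge n β) (hk : k ≤ n) : 0 ≤ (β k).2 := by
  rcases Nat.eq_zero_or_pos k with rfl | hk0
  · simp [h.1.1]
  · exact (h.2 k hk0 hk).1.le

theorem IsBridge.snd_le_snd_end (h : IsBridge n β) (hk : k ≤ n) : (β k).2 ≤ (β n).2 := by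
  rcases Nat.eq_zero_or_pos k with rfl | hk0
  · simpa [h.1.1] using h.snd_nonneg le_rfl
  · exact (h.2 k hk0 hk).2

theorem isBridge_concatWalk (hβ : IsBridge m β) (hδ : IsBridge n δ) :
    IsBridge (m + n) (concatWalk m β δ) := by
  have hge : ∀ k, m ≤ k → concatWalk m β δ k = β m + δ (k - m) :=
    fun k => concatWalk_of_ge hδ.1.1
  have hend : (concatWalk m β δ (m + n)).2 = (β m).2 + (δ n).2 := by simp [hge]
  refine ⟨isSAW_concatWalk hβ.1 hδ.1 fun i hi j hj hj0 heq => ?_, fun k hk0 hkn => ?_⟩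
  · have := congrArg Prod.snd heq
    simp only [Prod.snd_add] at this
    linarith [hβ.snd_le_snd_end hi, (hδ.2 j hj0 hj).1]
  · rw [hend]
    rcases le_or_gt k m with hkm | hkm
    · rw [concatWalk_of_le hkm]
      exact ⟨(hβ.2 k hk0 hkm).1, by linarith [hβ.snd_le_snd_end hkm, hδ.snd_nonneg le_rfl]⟩
    · rw [hge k hkm.le, Prod.snd_add]
      have := hδ.2 (k - m) (by omega) (by omega)
      constructor <;> linarith [hβ.snd_nonneg le_rfl]

def verticalWalk (n : ℕ) : ℕ → ℤ × ℤ := fun k => (0, ((min k n : ℕ) : ℤ))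

theorem isBridge_verticalWalk (n : ℕ) : IsBridge n (verticalWalk n) := by
  refine ⟨⟨by simp [verticalWalk], fun i hi => ?_, fun i hi j hj hij => ?_, fun i hi => ?_⟩,
    fun k hk0 hkn => ?_⟩
  · simp [verticalWalk, hi.le, Nat.succ_le_of_lt hi]
  · simp only [verticalWalk, Prod.mk.injEq, Nat.cast_inj, true_and] at hij
    omega
  · simp [verticalWalk, hi]
  · simp only [verticalWalk, min_eq_left hkn, min_self, Nat.cast_pos, Nat.cast_le]
    exact ⟨hk0, hkn⟩

end Bridges

theorem one_le_cSAB (n : ℕ) : 1 ≤ cSAB n :=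
  Nat.one_le_iff_ne_zero.2 <| Nat.card_ne_zero.2
    ⟨⟨⟨verticalWalk n, isBridge_verticalWalk n⟩⟩, inferInstance⟩

theorem cSAB_le_cSAW (n : ℕ) : cSAB n ≤ cSAW n :=
  Nat.card_le_card_of_injective _ (Subtype.impEmbedding _ _ fun _ h => h.1).injective

theorem cSAW_pos (n : ℕ) : 0 < cSAW n := (one_le_cSAB n).trans (cSAB_le_cSAW n)

theorem cSAB_mul_le (m n : ℕ) : cSAB m * cSAB n ≤ cSAB (m + n) := by
  rw [cSAB, cSAB, cSAB, ← Nat.card_prod]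
  refine Nat.card_le_card_of_injective (fun p =>
    ⟨concatWalk m p.1.1 p.2.1, isBridge_concatWalk p.1.2 p.2.2⟩) fun p q h => ?_
  obtain ⟨h1, h2⟩ := eq_and_eq_of_concatWalk_eq p.1.2.1 q.1.2.1 p.2.2.1.1 q.2.2.1.1
    (congrArg Subtype.val h)
  exact Prod.ext (Subtype.ext h1) (Subtype.ext h2)

theorem cSAW_add_le (m n : ℕ) : cSAW (m + n) ≤ cSAW m * cSAW n := by
  rw [cSAW, cSAW, cSAW, ← Nat.card_prod]
  refine Nat.card_le_card_of_injective (fun γ =>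
    (⟨truncWalk m γ.1, isSAW_truncWalk γ.2 (Nat.le_add_right m n)⟩,
      ⟨shiftWalk m γ.1, isSAW_shiftWalk γ.2⟩)) fun γ γ' h => ?_
  simp only [Prod.mk.injEq, Subtype.mk.injEq] at h
  rw [Subtype.ext_iff, ← concatWalk_truncWalk_shiftWalk m γ.1,
    ← concatWalk_truncWalk_shiftWalk m γ'.1, h.1, h.2]

theorem cSAB_pow_le_cSAW (n k : ℕ) : cSAB n ^ k ≤ cSAW (n * k) := by
  refine le_trans ?_ (cSAB_le_cSAW _)
  induction k with
  | zero => simpa using one_le_cSAB 0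
  | succ k ih => exact (Nat.mul_le_mul_right _ ih).trans (cSAB_mul_le _ _)

theorem subadditive_log_cSAW : Subadditive fun n => Real.log (cSAW n) := fun m n => by
  have hpos (k : ℕ) : (0 : ℝ) < cSAW k := Nat.cast_pos.2 (cSAW_pos k)
  rw [← Real.log_mul (hpos m).ne' (hpos n).ne']
  exact Real.log_le_log (hpos _) (by exact_mod_cast cSAW_add_le m n)

theorem bddBelow_log_cSAW_div : BddBelow (Set.range fun n : ℕ => Real.log (cSAW n) / n) :=
  ⟨0, Set.forall_mem_range.2 fun n =>
    div_nonneg (Real.log_nonneg (by exact_mod_cast cSAW_pos n)) n.cast_nonneg⟩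

theorem log_cSAB_le {n : ℕ} (hn : n ≠ 0) : Real.log (cSAB n) ≤ n * subadditive_log_cSAW.lim := by
  have hnk : Filter.Tendsto (fun k => n * k) Filter.atTop Filter.atTop :=
    Filter.tendsto_id.const_mul_atTop' (Nat.pos_of_ne_zero hn)
  have hlim := ((subadditive_log_cSAW.tendsto_lim bddBelow_log_cSAW_div).comp hnk).const_mul (n : ℝ)
  refine ge_of_tendsto hlim (Filter.eventually_ne_atTop 0 |>.mono fun k hk => ?_)
  have hpow : k * Real.log (cSAB n) ≤ Real.log (cSAW (n * k)) := by
    rw [← Real.log_pow]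
    exact Real.log_le_log (by have := one_le_cSAB n; positivity)
      (by exact_mod_cast cSAB_pow_le_cSAW n k)
  have hk' : (0 : ℝ) < k := by positivity
  simp only [Function.comp_apply, Nat.cast_mul]
  rw [mul_div_assoc', le_div_iff₀ (by positivity)]
  nlinarith

theorem exp_lim_le_mu : Real.exp subadditive_log_cSAW.lim ≤ mu := by
  refine le_ciInf fun n => ?_
  have hpos : (0 : ℝ) < cSAW (n + 1) := Nat.cast_pos.2 (cSAW_pos _)
  rw [Real.rpow_def_of_pos hpos, Real.exp_le_exp, ← div_eq_mul_one_div]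
  exact_mod_cast subadditive_log_cSAW.lim_le_div bddBelow_log_cSAW_div n.succ_ne_zero

theorem cSAB_le_mu_pow {n : ℕ} (hn : n ≠ 0) : (cSAB n : ℝ) ≤ mu ^ n :=
  calc (cSAB n : ℝ) = Real.exp (Real.log (cSAB n)) :=
        (Real.exp_log (Nat.cast_pos.2 (one_le_cSAB n))).symm
    _ ≤ Real.exp (n * subadditive_log_cSAW.lim) := Real.exp_le_exp.2 (log_cSAB_le hn)
    _ = Real.exp subadditive_log_cSAW.lim ^ n := by rw [← Real.exp_nat_mul]
    _ ≤ mu ^ n := pow_le_pow_left₀ (Real.exp_pos _).le exp_lim_le_mu n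

noncomputable def maxHeight (n : ℕ) (γ : ℕ → ℤ × ℤ) : ℤ :=
  (range (n + 1)).sup' nonempty_range_add_one fun k => (γ k).2

noncomputable def lastMaxTime (n : ℕ) (γ : ℕ → ℤ × ℤ) : ℕ :=
  Nat.findGreatest (fun k => (γ k).2 = maxHeight n γ) n

def tailWalk (t : ℕ) (γ : ℕ → ℤ × ℤ) : ℕ → ℤ × ℤ := flipWalk (shiftWalk t γ)

section Decomposition

variable {n k : ℕ} {γ : ℕ → ℤ × ℤ}

theorem le_maxHeight (hk : k ≤ n) : (γ k).2 ≤ maxHeight n γ :=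
  le_sup' (fun k => (γ k).2) (mem_range.2 (Nat.lt_succ_of_le hk))

theorem maxHeight_le {c : ℤ} (h : ∀ k ≤ n, (γ k).2 ≤ c) : maxHeight n γ ≤ c :=
  sup'_le _ _ fun k hk => h k (Nat.lt_succ_iff.1 (mem_range.1 hk))

theorem lastMaxTime_le : lastMaxTime n γ ≤ n := Nat.findGreatest_le n

theorem snd_lastMaxTime : (γ (lastMaxTime n γ)).2 = maxHeight n γ := by
  obtain ⟨k, hk, he⟩ := exists_mem_eq_sup' nonempty_range_add_one fun k => (γ k).2
  exact Nat.findGreatest_spec (P := fun k => (γ k).2 = maxHeight n γ)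
    (Nat.lt_succ_iff.1 (mem_range.1 hk)) he.symm

theorem snd_lt_maxHeight (htk : lastMaxTime n γ < k) (hk : k ≤ n) : (γ k).2 < maxHeight n γ :=
  (le_maxHeight hk).lt_of_ne (Nat.findGreatest_is_greatest htk hk)

theorem IsSAW.maxHeight_le_lastMaxTime (h : IsSAW n γ) : maxHeight n γ ≤ lastMaxTime n γ :=
  snd_lastMaxTime.symm.trans_le (h.snd_le lastMaxTime_le)

theorem isHSW_tailWalk (h : IsSAW n γ) :
    IsHSW (n - lastMaxTime n γ) (tailWalk (lastMaxTime n γ) γ) := by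
  have h' : IsSAW (lastMaxTime n γ + (n - lastMaxTime n γ)) γ := by
    rwa [Nat.add_sub_cancel' lastMaxTime_le]
  refine ⟨isSAW_flipWalk (isSAW_shiftWalk h'), fun k hk0 hk => ?_⟩
  have := snd_lt_maxHeight (n := n) (γ := γ) (k := lastMaxTime n γ + k) (by omega) (by omega)
  simp only [tailWalk, flipWalk, shiftWalk, Prod.snd_sub, neg_sub, snd_lastMaxTime]
  omega

theorem IsHSW.one_le_maxHeight (h : IsHSW n γ) (hn : 0 < n) : 1 ≤ maxHeight n γ :=
  Int.add_one_le_of_lt ((h.2 1 one_pos hn).trans_le (le_maxHeight hn))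

theorem IsHSW.lastMaxTime_pos (h : IsHSW n γ) (hn : 0 < n) : 0 < lastMaxTime n γ := by
  by_contra! h0
  have := h.one_le_maxHeight hn
  rw [← snd_lastMaxTime, Nat.le_zero.1 h0, h.1.1] at this
  exact absurd this (by decide)

theorem IsHSW.isBridge_truncWalk (h : IsHSW n γ) :
    IsBridge (lastMaxTime n γ) (truncWalk (lastMaxTime n γ) γ) := by
  refine ⟨isSAW_truncWalk h.1 lastMaxTime_le, fun k hk0 hk => ?_⟩
  simp only [truncWalk, min_eq_left hk, min_self, snd_lastMaxTime]
  exact ⟨h.2 k hk0 (hk.trans lastMaxTime_le), le_maxHeight (hk.trans lastMaxTime_le)⟩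

theorem IsHSW.maxHeight_tailWalk_lt (h : IsHSW n γ) (hn : 0 < n) :
    maxHeight (n - lastMaxTime n γ) (tailWalk (lastMaxTime n γ) γ) < maxHeight n γ := by
  have ht := h.lastMaxTime_pos hn
  have htn : lastMaxTime n γ ≤ n := lastMaxTime_le
  refine Int.lt_of_le_sub_one (maxHeight_le fun k hk => ?_)
  have := h.2 (lastMaxTime n γ + k) (by omega) (by omega)
  simp only [tailWalk, flipWalk, shiftWalk, Prod.snd_sub, neg_sub, snd_lastMaxTime]
  omega

/-- The bridges of the Hammersley–Welsh decomposition, encoded by the set of their (strictly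
decreasing) heights together with their concatenation. -/
noncomputable def decompose (n : ℕ) (γ : ℕ → ℤ × ℤ) : Finset ℕ × (ℕ → ℤ × ℤ) :=
  if 0 < lastMaxTime n γ then
    let t := lastMaxTime n γ
    let r := decompose (n - t) (tailWalk t γ)
    (insert (maxHeight n γ).toNat r.1, concatWalk t (truncWalk t γ) r.2)
  else (∅, γ)
termination_by n
decreasing_by
  rename_i ht
  exact Nat.sub_lt (ht.trans_le lastMaxTime_le) ht

theorem decompose_zero (γ : ℕ → ℤ × ℤ) : decompose 0 γ = (∅, γ) := by
  rw [decompose, if_neg (by simp [Nat.le_zero.1 (lastMaxTime_le (n := 0) (γ := γ))])]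

theorem decompose_of_pos (ht : 0 < lastMaxTime n γ) :
    decompose n γ = (insert (maxHeight n γ).toNat
      (decompose (n - lastMaxTime n γ) (tailWalk (lastMaxTime n γ) γ)).1,
      concatWalk (lastMaxTime n γ) (truncWalk (lastMaxTime n γ) γ)
        (decompose (n - lastMaxTime n γ) (tailWalk (lastMaxTime n γ) γ)).2) := by
  rw [decompose, if_pos ht]

theorem IsHSW.isBridge_decompose (h : IsHSW n γ) : IsBridge n (decompose n γ).2 := by
  induction n using Nat.strong_induction_on generalizing γ with
  | _ n ih =>
  rcases Nat.eq_zero_or_pos n with rfl | hn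
  · exact ⟨by simpa [decompose_zero] using h.1, fun k hk0 hk => by omega⟩
  have hB := isBridge_concatWalk (h.isBridge_truncWalk)
    (ih _ (Nat.sub_lt hn (h.lastMaxTime_pos hn)) (isHSW_tailWalk h.1))
  rw [decompose_of_pos (h.lastMaxTime_pos hn)]
  rwa [Nat.add_sub_cancel' lastMaxTime_le] at hB

theorem IsHSW.mem_decompose_fst (h : IsHSW n γ) {s : ℕ} (hs : s ∈ (decompose n γ).1) :
    1 ≤ s ∧ (s : ℤ) ≤ maxHeight n γ := by
  induction n using Nat.strong_induction_on generalizing γ s with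
  | _ n ih =>
  rcases Nat.eq_zero_or_pos n with rfl | hn
  · simp [decompose_zero] at hs
  have h1 := h.one_le_maxHeight hn
  rw [decompose_of_pos (h.lastMaxTime_pos hn), mem_insert] at hs
  rcases hs with rfl | hs
  · omega
  · have := ih _ (Nat.sub_lt hn (h.lastMaxTime_pos hn)) (isHSW_tailWalk h.1) hs
    have := h.maxHeight_tailWalk_lt hn
    omega

theorem IsHSW.toNat_maxHeight_notMem (h : IsHSW n γ) (hn : 0 < n) :
    (maxHeight n γ).toNat ∉ (decompose (n - lastMaxTime n γ) (tailWalk (lastMaxTime n γ) γ)).1 :=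
  fun hs => by
    have := (isHSW_tailWalk h.1).mem_decompose_fst hs
    have := h.maxHeight_tailWalk_lt hn
    omega

theorem IsHSW.isGreatest_decompose_fst (h : IsHSW n γ) (hn : 0 < n) :
    IsGreatest ↑(decompose n γ).1 (maxHeight n γ).toNat := by
  refine ⟨?_, fun s hs => ?_⟩
  · rw [decompose_of_pos (h.lastMaxTime_pos hn)]
    exact mem_insert_self _ _
  · have := h.mem_decompose_fst hs
    omega

theorem IsHSW.sum_decompose_fst_le (h : IsHSW n γ) : ∑ s ∈ (decompose n γ).1, s ≤ n := by
  induction n using Nat.strong_induction_on generalizing γ with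
  | _ n ih =>
  rcases Nat.eq_zero_or_pos n with rfl | hn
  · simp [decompose_zero]
  have ht := h.lastMaxTime_pos hn
  rw [decompose_of_pos ht, sum_insert (h.toNat_maxHeight_notMem hn)]
  have := ih _ (Nat.sub_lt hn ht) (isHSW_tailWalk h.1)
  have := h.1.maxHeight_le_lastMaxTime
  have : lastMaxTime n γ ≤ n := lastMaxTime_le
  omega

theorem IsHSW.snd_decompose_snd_le_iff (h : IsHSW n γ) (hn : 0 < n) (hk : k ≤ n) :
    ((decompose n γ).2 k).2 ≤ maxHeight n γ ↔ k ≤ lastMaxTime n γ := by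
  have ht := h.lastMaxTime_pos hn
  have hB := (isHSW_tailWalk h.1).isBridge_decompose
  rw [decompose_of_pos ht]
  dsimp only
  constructor
  · intro hle
    by_contra! hkt
    rw [concatWalk_of_ge hB.1.1 hkt.le] at hle
    have := (hB.2 (k - lastMaxTime n γ) (by omega) (by omega)).1
    simp only [Prod.snd_add, truncWalk, min_self, snd_lastMaxTime] at hle
    omega
  · intro hkt
    rw [concatWalk_of_le hkt]
    simpa [truncWalk, hkt] using le_maxHeight hk

theorem injOn_decompose (n : ℕ) : Set.InjOn (decompose n) {γ | IsHSW n γ} := by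
  induction n using Nat.strong_induction_on with
  | _ n ih =>
  intro γ hγ γ' hγ' heq
  rcases Nat.eq_zero_or_pos n with rfl | hn
  · simpa [decompose_zero] using heq
  have hh : maxHeight n γ = maxHeight n γ' := by
    have := (hγ.isGreatest_decompose_fst hn).unique (heq ▸ hγ'.isGreatest_decompose_fst hn)
    have := hγ.one_le_maxHeight hn
    have := hγ'.one_le_maxHeight hn
    omega
  have ht : lastMaxTime n γ = lastMaxTime n γ' := by
    apply le_antisymm
    · rw [← hγ'.snd_decompose_snd_le_iff hn lastMaxTime_le, ← heq, ← hh,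
        hγ.snd_decompose_snd_le_iff hn lastMaxTime_le]
    · rw [← hγ.snd_decompose_snd_le_iff hn lastMaxTime_le, heq, hh,
        hγ'.snd_decompose_snd_le_iff hn lastMaxTime_le]
  have hnotMem := hγ'.toNat_maxHeight_notMem hn
  have hδ := isHSW_tailWalk hγ.1
  have hδ' := isHSW_tailWalk hγ'.1
  rw [decompose_of_pos (hγ.lastMaxTime_pos hn), decompose_of_pos (hγ'.lastMaxTime_pos hn)] at heq
  rw [← ht, ← hh] at heq hnotMem
  rw [← ht] at hδ'
  obtain ⟨htrunc, hB⟩ := eq_and_eq_of_concatWalk_eq (isSAW_truncWalk hγ.1 lastMaxTime_le)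
    (ht ▸ isSAW_truncWalk hγ'.1 lastMaxTime_le) hδ.isBridge_decompose.1.1
    hδ'.isBridge_decompose.1.1 (congrArg Prod.snd heq)
  have hS := congrArg (fun p => (p.1.erase (maxHeight n γ).toNat)) heq
  simp only [erase_insert (hγ.toNat_maxHeight_notMem hn), erase_insert hnotMem] at hS
  have hshift := flipWalk_injective <|
    ih _ (Nat.sub_lt hn (hγ.lastMaxTime_pos hn)) hδ hδ' (Prod.ext hS hB)
  rw [← concatWalk_truncWalk_shiftWalk (lastMaxTime n γ) γ,
    ← concatWalk_truncWalk_shiftWalk (lastMaxTime n γ) γ', htrunc]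
  exact congrArg _ hshift

end Decomposition

def strictPartitionsLE (n : ℕ) : Finset (Finset ℕ) :=
  (Icc 1 n).powerset.filter fun S => ∑ k ∈ S, k ≤ n

theorem IsHSW.decompose_fst_mem {n : ℕ} {γ : ℕ → ℤ × ℤ} (h : IsHSW n γ) :
    (decompose n γ).1 ∈ strictPartitionsLE n := by
  refine mem_filter.2 ⟨mem_powerset.2 fun s hs => ?_, h.sum_decompose_fst_le⟩
  have hs := h.mem_decompose_fst hs
  have := h.1.maxHeight_le_lastMaxTime
  have : lastMaxTime n γ ≤ n := lastMaxTime_le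
  exact mem_Icc.2 ⟨hs.1, by omega⟩

theorem cHSW_le_card_mul_cSAB (n : ℕ) : cHSW n ≤ #(strictPartitionsLE n) * cSAB n := by
  rw [cHSW, cSAB, ← Nat.card_eq_finsetCard, ← Nat.card_prod]
  refine Nat.card_le_card_of_injective (fun γ =>
    (⟨(decompose n γ.1).1, γ.2.decompose_fst_mem⟩, ⟨(decompose n γ.1).2, γ.2.isBridge_decompose⟩))
    fun γ γ' h => Subtype.ext (injOn_decompose n γ.2 γ'.2 ?_)
  simp only [Prod.mk.injEq, Subtype.mk.injEq] at h
  exact Prod.ext h.1 h.2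

/-- Rankin's trick: weight each set of parts by `exp (t (n - ∑ S)) ≥ 1`. -/
theorem card_strictPartitionsLE_le_exp_mul_prod (n : ℕ) {t : ℝ} (ht : 0 ≤ t) :
    (#(strictPartitionsLE n) : ℝ) ≤
      Real.exp (t * n) * ∏ k ∈ Icc 1 n, (1 + Real.exp (-(t * k))) := by
  rw [prod_one_add, mul_sum, card_eq_sum_ones, Nat.cast_sum]
  refine le_trans (sum_le_sum fun S hS => ?_) (sum_le_sum_of_subset_of_nonneg
    (filter_subset _ _) fun _ _ _ => by positivity)
  have hsum : ((∑ k ∈ S, k : ℕ) : ℝ) ≤ n := by exact_mod_cast (mem_filter.1 hS).2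
  rw [← Real.exp_sum, ← Real.exp_add, Nat.cast_one, Real.one_le_exp_iff, sum_neg_distrib,
    ← mul_sum]
  push_cast at hsum
  nlinarith

theorem sum_exp_neg_mul_le (n : ℕ) {t : ℝ} (ht : 0 < t) :
    ∑ k ∈ Icc 1 n, Real.exp (-(t * k)) ≤ 1 / t := by
  set r := Real.exp (-t)
  have hr : r < 1 := Real.exp_lt_one_iff.2 (neg_lt_zero.2 ht)
  have hexp (k : ℕ) : Real.exp (-(t * k)) = r ^ k := by
    rw [← Real.exp_nat_mul]
    ring_nf
  rw [sum_congr rfl fun k _ => hexp k, ← Ico_add_one_right_eq_Icc]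
  refine (geom_sum_Ico_le_of_lt_one (Real.exp_nonneg _) hr).trans ?_
  have hrt : (1 + t) * r ≤ 1 := by
    rw [show r = (Real.exp t)⁻¹ from Real.exp_neg t, ← div_eq_mul_inv, div_le_one (Real.exp_pos t)]
    linarith [Real.add_one_le_exp t]
  rw [pow_one, div_le_div_iff₀ (by linarith) ht]
  linarith

theorem card_strictPartitionsLE_le {n : ℕ} (hn : 0 < n) :
    (#(strictPartitionsLE n) : ℝ) ≤ Real.exp (2 * Real.sqrt n) := by
  have hs : 0 < Real.sqrt n := Real.sqrt_pos.2 (Nat.cast_pos.2 hn)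
  set t := (Real.sqrt n)⁻¹
  calc (#(strictPartitionsLE n) : ℝ)
      ≤ Real.exp (t * n) * ∏ k ∈ Icc 1 n, (1 + Real.exp (-(t * k))) :=
        card_strictPartitionsLE_le_exp_mul_prod n (by positivity)
    _ ≤ Real.exp (t * n) * Real.exp (∑ k ∈ Icc 1 n, Real.exp (-(t * k))) := by
        gcongr
        exact Real.prod_one_add_le_exp_sum _ fun _ => (Real.exp_pos _).le
    _ ≤ Real.exp (t * n) * Real.exp (1 / t) := by
        gcongr
        exact sum_exp_neg_mul_le n (by positivity)
    _ = Real.exp (2 * Real.sqrt n) := by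
        rw [← Real.exp_add, inv_mul_eq_div, Real.div_sqrt, one_div, inv_inv, two_mul]

/-- Hammersley–Welsh bound for half-space walks:
`|HSW_n| ≤ exp(C n^{1/2}) μ^n` for all `n ∈ ℕ`. -/
theorem hsw_hammersley_welsh :
    ∃ C : ℝ, 0 < C ∧ ∀ n : ℕ, 1 ≤ n →
      (cHSW n : ℝ) ≤ Real.exp (C * Real.sqrt n) * mu ^ n := by
  refine ⟨2, two_pos, fun n hn => ?_⟩
  calc (cHSW n : ℝ) ≤ #(strictPartitionsLE n) * cSAB n := by
        exact_mod_cast cHSW_le_card_mul_cSAB n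
    _ ≤ Real.exp (2 * Real.sqrt n) * mu ^ n :=
        mul_le_mul (card_strictPartitionsLE_le hn) (cSAB_le_mu_pow (by omega))
          (Nat.cast_nonneg _) (Real.exp_nonneg _)
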